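/- Let K be a field of characteristic p > 0, let q be a power of p, and let a, b ∈ K satisfy a^{q²} = a, b^{q²} = b, and a^q + a = b^{q+1}. If x, y, z ∈ K satisfy x^q + x = y^{q+1} and y((x^q + x)^{q−1} − 1) = z^{q²−q+1}, then the triple (x + b^q y + a, y + b, z) also satisfies these two equations. (That is, the translation automorphisms of the group G₁ of order q³ preserve the affine Giulietti–Korchmáros curve.) -/

import Mathlib

/-!
Frobenius `u ↦ u^q` is additive, so the first equation for the translated point follows by
expanding and using `b^{q²} = b` and `a^q + a = b^{q+1}`. Given the first equation, the second one
reads `y^{q²} - y = z^{q²-q+1}`, because `(q + 1)(q - 1) + 1 = q²`; and `y ↦ y^{q²} - y` is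
invariant under `y ↦ y + b` for `b` in the field with `q²` elements.
-/

theorem mul_pow_succ_pow_pred_sub_one {R : Type*} [CommRing R] {q : ℕ} (hq : 1 ≤ q) (u : R) :
    u * ((u ^ (q + 1)) ^ (q - 1) - 1) = u ^ (q ^ 2) - u := by
  obtain ⟨m, rfl⟩ := Nat.exists_eq_add_of_le' hq
  have hexp : (m + 1 + 1) * (m + 1 - 1) + 1 = (m + 1) ^ 2 := by
    rw [Nat.add_sub_cancel]; ring
  rw [← pow_mul, mul_sub, mul_one, ← pow_succ', hexp]

section Frobenius

variable {R : Type*} [CommRing R] (p : ℕ) [ExpChar R p] {n q : ℕ}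

theorem translate_pow_add_self_eq_pow_succ (hq : q = p ^ n) {a b x y : R}
    (hb : b ^ (q ^ 2) = b) (hab : a ^ q + a = b ^ (q + 1)) (h : x ^ q + x = y ^ (q + 1)) :
    (x + b ^ q * y + a) ^ q + (x + b ^ q * y + a) = (y + b) ^ (q + 1) := by
  subst hq
  have hbq : (b ^ p ^ n) ^ p ^ n = b := by rw [← pow_mul, ← sq, hb]
  rw [add_pow_expChar_pow, add_pow_expChar_pow, mul_pow, hbq, pow_succ, add_pow_expChar_pow]
  rw [pow_succ] at h hab
  linear_combination h + hab

theorem add_pow_sq_sub_add (hq : q = p ^ n) {b : R} (hb : b ^ (q ^ 2) = b) (y : R) :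
    (y + b) ^ (q ^ 2) - (y + b) = y ^ (q ^ 2) - y := by
  subst hq
  rw [← pow_mul, add_pow_expChar_pow, pow_mul, hb]
  ring

end Frobenius

theorem stmt_11_general {K : Type*} [Field K] (p n q : ℕ) (hp : p.Prime) [CharP K p]
    (hq : q = p ^ n) (a b : K)
    (hb : b ^ (q ^ 2) = b) (hab : a ^ q + a = b ^ (q + 1))
    (x y z : K)
    (h1 : x ^ q + x = y ^ (q + 1))
    (h2 : y * ((x ^ q + x) ^ (q - 1) - 1) = z ^ (q ^ 2 - q + 1)) :
    (x + b ^ q * y + a) ^ q + (x + b ^ q * y + a) = (y + b) ^ (q + 1) ∧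
      (y + b) * (((x + b ^ q * y + a) ^ q + (x + b ^ q * y + a)) ^ (q - 1) - 1) =
        z ^ (q ^ 2 - q + 1) := by
  have : ExpChar K p := ExpChar.prime hp
  have hq1 : 1 ≤ q := hq ▸ expChar_pow_pos K p n
  have htrans := translate_pow_add_self_eq_pow_succ p hq hb hab h1
  refine ⟨htrans, ?_⟩
  rw [h1, mul_pow_succ_pow_pred_sub_one hq1] at h2
  rw [htrans, mul_pow_succ_pow_pred_sub_one hq1, add_pow_sq_sub_add p hq hb, h2]

/-- The translations `(x, y, z) ↦ (x + b^q y + a, y + b, z)` with `a, b` in the field of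
`q²` elements and `a^q + a = b^{q+1}` preserve the affine Giulietti–Korchmáros curve. -/
theorem stmt_11 {K : Type*} [Field K] (p n q : ℕ) (hp : p.Prime) [CharP K p]
    (hn : 0 < n) (hq : q = p ^ n) (a b : K)
    (ha : a ^ (q ^ 2) = a) (hb : b ^ (q ^ 2) = b) (hab : a ^ q + a = b ^ (q + 1))
    (x y z : K)
    (h1 : x ^ q + x = y ^ (q + 1))
    (h2 : y * ((x ^ q + x) ^ (q - 1) - 1) = z ^ (q ^ 2 - q + 1)) :
    (x + b ^ q * y + a) ^ q + (x + b ^ q * y + a) = (y + b) ^ (q + 1) ∧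
      (y + b) * (((x + b ^ q * y + a) ^ q + (x + b ^ q * y + a)) ^ (q - 1) - 1) =
        z ^ (q ^ 2 - q + 1) :=
  stmt_11_general p n q hp hq a b hb hab x y z h1 h2
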